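/- arXiv:2510.17595 — 2 statements merged into one kernel-verified Lean document; each statement's English description precedes it below -/
import Mathlib

section
/- Let k ≥ 5 be an integer with √k ≤ k, let j ∈ {1,…,k}, let T be a tour on V_k, and let I ⊆ V_k be a saturated interval of T with respect to column j, i.e., I is a set of consecutive vertices in the cyclic order of T with |I| ≤ 4k and |I ∩ C_j| ≥ √k. Let E_j[I] := {(x,y) : x ∈ I ∩ C_j, y ∈ I, x ≠ y}. Then Σ_{e ∈ E_j[I]} P_{A∼p_k}[e ∈ E(T[A])] · c_k(e) ≥ |I ∩ C_j|² / (2⁷ · e⁴ · k). -/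
noncomputable section

/-- `l` is a tour on the finite set `A`: a cyclic ordering of `A`, visiting each element
exactly once. -/
def IsTour {V : Type*} [DecidableEq V] (A : Finset V) (l : List V) : Prop :=
  l.Nodup ∧ l.toFinset = A

/-- Short-cutting a tour to the set `A` of active vertices. -/
def shortcut {V : Type*} [DecidableEq V] (l : List V) (A : Finset V) : List V :=
  l.filter (fun v => v ∈ A)

/-- The expectation of `f` over the random set of active vertices, where each vertex `v`
is active independently with probability `p v`. -/
def apExpect {V : Type*} [Fintype V] [DecidableEq V] (p : V → ℝ) (f : Finset V → ℝ) : ℝ :=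
  ∑ A : Finset V, (∏ v ∈ A, p v) * (∏ v ∈ Aᶜ, (1 - p v)) * f A

/-- The probability (over `A ∼ p`) that the ordered pair `e` is an edge of the short-cut
tour `T[A]` (i.e., a consecutive pair of the cyclic order of `T` restricted to `A`). -/
def edgeProb {V : Type*} [Fintype V] [DecidableEq V] (p : V → ℝ) (T : List V) (e : V × V) :
    ℝ :=
  apExpect p (fun A =>
    if e ∈ (shortcut T A).zip ((shortcut T A).rotate 1) then 1 else 0)

/-- The cost function of the asymmetric grid instance on `Fin k × Fin k` (first coordinate:
row, second coordinate: column): the shortest-path metric of the digraph with a unit-cost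
edge from every vertex of column `j` to every vertex of column `j+1` (cyclically). -/
def gridCost (k : ℕ) (u w : Fin k × Fin k) : ℝ :=
  if u = w then 0
  else if u.2 = w.2 then (k : ℝ)
  else (((w.2.val + k - u.2.val) % k : ℕ) : ℝ)

/-- Column `j` of the asymmetric grid instance. -/
def gridColumn (k : ℕ) (j : Fin k) : Finset (Fin k × Fin k) :=
  Finset.univ.filter (fun v => v.2 = j)

section AuxProb
variable {V : Type*} [Fintype V] [DecidableEq V]

lemma apExpect_nonneg {p : V → ℝ} (hp0 : ∀ v, 0 ≤ p v) (hp1 : ∀ v, p v ≤ 1)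
    {f : Finset V → ℝ} (hf : ∀ A, 0 ≤ f A) : 0 ≤ apExpect p f := by
  refine Finset.sum_nonneg fun A _ => ?_
  have h1 : 0 ≤ ∏ v ∈ A, p v := Finset.prod_nonneg fun v _ => hp0 v
  have h2 : 0 ≤ ∏ v ∈ Aᶜ, (1 - p v) := Finset.prod_nonneg fun v _ => by linarith [hp1 v]
  exact mul_nonneg (mul_nonneg h1 h2) (hf A)

lemma apExpect_mono {p : V → ℝ} (hp0 : ∀ v, 0 ≤ p v) (hp1 : ∀ v, p v ≤ 1)
    {f g : Finset V → ℝ} (h : ∀ A, f A ≤ g A) : apExpect p f ≤ apExpect p g := by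
  refine Finset.sum_le_sum fun A _ => ?_
  have h1 : 0 ≤ ∏ v ∈ A, p v := Finset.prod_nonneg fun v _ => hp0 v
  have h2 : 0 ≤ ∏ v ∈ Aᶜ, (1 - p v) := Finset.prod_nonneg fun v _ => by linarith [hp1 v]
  exact mul_le_mul_of_nonneg_left (h A) (mul_nonneg h1 h2)

lemma apExpect_event (p : V → ℝ) (S B : Finset V) (hSB : Disjoint S B) :
    apExpect p (fun A => if S ⊆ A ∧ Disjoint B A then 1 else 0)
      = (∏ v ∈ S, p v) * ∏ v ∈ B, (1 - p v) := by
  classical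
  set R : Finset V := (S ∪ B)ᶜ with hR
  have hRS : Disjoint R S := by
    rw [hR]
    exact (disjoint_compl_left).mono_right Finset.subset_union_left
  have hRB : Disjoint R B := by
    rw [hR]
    exact (disjoint_compl_left).mono_right Finset.subset_union_right
  rw [apExpect]
  simp only [mul_ite, mul_one, mul_zero]
  rw [← Finset.sum_filter]
  have hi : ∀ A ∈ Finset.univ.filter
      (fun A : Finset V => S ⊆ A ∧ Disjoint B A), A \ S ∈ R.powerset := by
    intro A hA
    rw [Finset.mem_filter] at hA
    obtain ⟨-, hS, hB⟩ := hA
    rw [Finset.mem_powerset]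
    intro v hv
    rw [Finset.mem_sdiff] at hv
    rw [hR, Finset.mem_compl, Finset.mem_union]
    push_neg
    exact ⟨hv.2, fun hvB => (Finset.disjoint_left.mp hB hvB) hv.1⟩
  have hj : ∀ A' ∈ R.powerset, A' ∪ S ∈ Finset.univ.filter
      (fun A : Finset V => S ⊆ A ∧ Disjoint B A) := by
    intro A' hA'
    rw [Finset.mem_powerset] at hA'
    rw [Finset.mem_filter]
    refine ⟨Finset.mem_univ _, Finset.subset_union_right, ?_⟩
    rw [Finset.disjoint_left]
    intro v hvB
    rw [Finset.mem_union]
    push_neg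
    exact ⟨fun hv => (Finset.disjoint_left.mp hRB (hA' hv)) hvB,
      fun hv => (Finset.disjoint_left.mp hSB hv) hvB⟩
  have hleft : ∀ A ∈ Finset.univ.filter
      (fun A : Finset V => S ⊆ A ∧ Disjoint B A), (A \ S) ∪ S = A := by
    intro A hA
    rw [Finset.mem_filter] at hA
    exact Finset.sdiff_union_of_subset hA.2.1
  have hright : ∀ A' ∈ R.powerset, (A' ∪ S) \ S = A' := by
    intro A' hA'
    rw [Finset.mem_powerset] at hA'
    exact Finset.union_sdiff_cancel_right
      (Finset.disjoint_left.mpr fun v hv => Finset.disjoint_left.mp hRS (hA' hv))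
  have hval : ∀ A ∈ Finset.univ.filter
      (fun A : Finset V => S ⊆ A ∧ Disjoint B A),
      (∏ v ∈ A, p v) * ∏ v ∈ Aᶜ, (1 - p v)
        = ((∏ v ∈ S, p v) * ∏ v ∈ B, (1 - p v)) *
            ((∏ v ∈ A \ S, p v) * ∏ v ∈ R \ (A \ S), (1 - p v)) := by
    intro A hA
    rw [Finset.mem_filter] at hA
    obtain ⟨-, hS, hB⟩ := hA
    have hds : Disjoint (A \ S) S := Finset.sdiff_disjoint
    have hdBR : Disjoint B (R \ (A \ S)) :=
      hRB.symm.mono_right Finset.sdiff_subset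
    have hA1 : ∏ v ∈ A, p v = (∏ v ∈ A \ S, p v) * ∏ v ∈ S, p v := by
      rw [← Finset.prod_union hds, Finset.sdiff_union_of_subset hS]
    have hcompl : Aᶜ = B ∪ (R \ (A \ S)) := by
      ext v
      simp only [Finset.mem_compl, Finset.mem_union, Finset.mem_sdiff, hR]
      have h1 : v ∈ S → v ∈ A := fun h => hS h
      have h2 : v ∈ B → v ∉ A := fun h => Finset.disjoint_left.mp hB h
      constructor
      · intro hv
        by_cases hvB : v ∈ B
        · exact Or.inl hvB
        · exact Or.inr ⟨by push_neg; exact ⟨fun hs => hv (h1 hs), hvB⟩,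
            fun hh => hv hh.1⟩
      · rintro (hvB | ⟨hvR, hvn⟩)
        · exact h2 hvB
        · push_neg at hvR
          intro hvA
          exact hvn ⟨hvA, hvR.1⟩
    have hAc : ∏ v ∈ Aᶜ, (1 - p v)
        = (∏ v ∈ B, (1 - p v)) * ∏ v ∈ R \ (A \ S), (1 - p v) := by
      rw [hcompl, Finset.prod_union hdBR]
    rw [hA1, hAc]
    ring
  rw [Finset.sum_nbij' (t := R.powerset)
    (g := fun A' => ((∏ v ∈ S, p v) * ∏ v ∈ B, (1 - p v)) *
      ((∏ v ∈ A', p v) * ∏ v ∈ R \ A', (1 - p v)))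
    (fun A => A \ S) (fun A' => A' ∪ S) hi hj hleft hright hval]
  rw [← Finset.mul_sum, ← Finset.prod_add]
  have : ∏ v ∈ R, (p v + (1 - p v)) = 1 := by
    rw [Finset.prod_congr rfl (fun v _ => by ring : ∀ v ∈ R, p v + (1 - p v) = (1:ℝ))]
    exact Finset.prod_const_one
  rw [this, mul_one]

lemma edgeProb_ge (p : V → ℝ) (hp0 : ∀ v, 0 ≤ p v) (hp1 : ∀ v, p v ≤ 1)
    (T : List V) (x y : V) (B : Finset V)
    (hxy : x ≠ y) (hxB : x ∉ B) (hyB : y ∉ B)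
    (himp : ∀ A : Finset V, x ∈ A → y ∈ A → Disjoint B A →
      (x, y) ∈ (shortcut T A).zip ((shortcut T A).rotate 1)) :
    p x * p y * ∏ v ∈ B, (1 - p v) ≤ edgeProb p T (x, y) := by
  classical
  have hS : Disjoint ({x, y} : Finset V) B := by
    rw [Finset.disjoint_left]
    intro v hv
    rw [Finset.mem_insert, Finset.mem_singleton] at hv
    rcases hv with rfl | rfl
    · exact hxB
    · exact hyB
  have hev := apExpect_event p {x, y} B hS
  have hprod : ∏ v ∈ ({x, y} : Finset V), p v = p x * p y := Finset.prod_pair hxy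
  have hmono : apExpect p
      (fun A => if ({x, y} : Finset V) ⊆ A ∧ Disjoint B A then 1 else 0)
      ≤ edgeProb p T (x, y) := by
    apply apExpect_mono hp0 hp1
    intro A
    by_cases h : ({x, y} : Finset V) ⊆ A ∧ Disjoint B A
    · rw [if_pos h]
      have hx : x ∈ A := h.1 (Finset.mem_insert_self _ _)
      have hy : y ∈ A := h.1 (by simp)
      rw [if_pos (himp A hx hy h.2)]
    · rw [if_neg h]
      split <;> norm_num
  calc p x * p y * ∏ v ∈ B, (1 - p v)
      = apExpect p (fun A => if ({x, y} : Finset V) ⊆ A ∧ Disjoint B A then 1 else 0) := by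
        rw [hev, hprod]
    _ ≤ edgeProb p T (x, y) := hmono

end AuxProb

section AuxLists
variable {W : Type*}


variable {W : Type*}

lemma mem_edges_iff (l : List W) (e : W × W) :
    e ∈ l.zip (l.rotate 1) ↔
      ∃ (i : ℕ) (h : i < l.length),
        e.1 = l[i] ∧ e.2 = l[(i + 1) % l.length]'(Nat.mod_lt _ (Nat.lt_of_le_of_lt (Nat.zero_le i) h)) := by
  constructor
  · intro hmem
    obtain ⟨i, hi, he⟩ := List.mem_iff_getElem.mp hmem
    have hlen : (l.zip (l.rotate 1)).length = l.length := by
      simp [List.length_zip, List.length_rotate]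
    rw [hlen] at hi
    refine ⟨i, hi, ?_, ?_⟩
    · rw [← he, List.getElem_zip]
    · rw [← he, List.getElem_zip]
      simp only [List.getElem_rotate]
  · rintro ⟨i, hi, h1, h2⟩
    apply List.mem_iff_getElem.mpr
    refine ⟨i, ?_, ?_⟩
    · simp [List.length_zip, List.length_rotate]; omega
    · rw [List.getElem_zip]
      simp only [List.getElem_rotate]
      rw [Prod.ext_iff]
      exact ⟨h1.symm, h2.symm⟩

lemma mem_edges_rotate {l : List W} {e : W × W} {t : ℕ}
    (h : e ∈ (l.rotate t).zip ((l.rotate t).rotate 1)) : e ∈ l.zip (l.rotate 1) := by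
  rw [mem_edges_iff] at h ⊢
  obtain ⟨i, hi, h1, h2⟩ := h
  rw [List.length_rotate] at hi
  have hpos : 0 < l.length := Nat.lt_of_le_of_lt (Nat.zero_le i) hi
  simp only [List.getElem_rotate, List.length_rotate] at h1 h2
  refine ⟨(i + t) % l.length, Nat.mod_lt _ hpos, h1, ?_⟩
  have hidx : ((i + 1) % l.length + t) % l.length = ((i + t) % l.length + 1) % l.length := by
    rw [Nat.mod_add_mod, Nat.mod_add_mod]
    congr 1
    omega
  simp only [hidx] at h2
  exact h2

lemma mem_edges_of_append {l u w : List W} {x y : W} (h : l = u ++ x :: y :: w) :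
    (x, y) ∈ l.zip (l.rotate 1) := by
  rw [mem_edges_iff]
  have hlen : l.length = u.length + (w.length + 2) := by
    subst h; simp [List.length_append]
  have h1 : u.length < l.length := by omega
  refine ⟨u.length, h1, ?_, ?_⟩
  · subst h
    rw [List.getElem_append_right (le_refl u.length)]
    simp
  · have hmod : (u.length + 1) % l.length = u.length + 1 := Nat.mod_eq_of_lt (by omega)
    simp only [hmod]
    subst h
    rw [List.getElem_append_right (by omega : u.length ≤ u.length + 1)]
    simp

lemma cons_sublist_decomp {x : W} {t l : List W} (h : (x :: t).Sublist l) :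
    ∃ u v, l = u ++ x :: v ∧ t.Sublist v := by
  induction l with
  | nil => simp at h
  | cons b l ih =>
    cases h with
    | cons _ h' =>
      obtain ⟨u, v, hl, ht⟩ := ih h'
      exact ⟨b :: u, v, by rw [hl]; rfl, ht⟩
    | cons_cons _ h' => exact ⟨[], l, rfl, h'⟩

variable [DecidableEq W]

lemma shortcut_rotate (l : List W) (A : Finset W) (s : ℕ) :
    ∃ t, shortcut (l.rotate s) A = (shortcut l A).rotate t := by
  rcases Nat.eq_zero_or_pos l.length with h0 | h0
  · have : l = [] := List.length_eq_zero_iff.mp h0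
    subst this
    exact ⟨0, by simp [shortcut]⟩
  set s' := s % l.length with hs'
  have hlt : s' < l.length := Nat.mod_lt _ h0
  have h1 : l.rotate s = l.drop s' ++ l.take s' := by
    rw [← List.rotate_mod l s, ← hs']
    exact List.rotate_eq_drop_append_take hlt.le
  refine ⟨(List.filter (fun v => v ∈ A) (l.take s')).length, ?_⟩
  have h3 : (shortcut l A).rotate (List.filter (fun v => v ∈ A) (l.take s')).length
      = List.filter (fun v => v ∈ A) (l.drop s') ++ List.filter (fun v => v ∈ A) (l.take s') := by
    have h4 : shortcut l A
        = List.filter (fun v => v ∈ A) (l.take s') ++ List.filter (fun v => v ∈ A) (l.drop s') := by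
      rw [shortcut, ← List.filter_append, List.take_append_drop]
    rw [h4, List.rotate_eq_drop_append_take (by simp), List.drop_left, List.take_left]
  rw [h3, shortcut, h1, List.filter_append]

lemma shortcut_decomp {l u w v : List W} {x y : W} {A : Finset W}
    (h : l = u ++ x :: (w ++ y :: v)) (hx : x ∈ A) (hy : y ∈ A) (hw : ∀ z ∈ w, z ∉ A) :
    ∃ u' v', shortcut l A = u' ++ x :: y :: v' := by
  refine ⟨List.filter (fun z => z ∈ A) u, List.filter (fun z => z ∈ A) v, ?_⟩
  have hw' : List.filter (fun z => decide (z ∈ A)) w = [] :=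
    List.filter_eq_nil_iff.mpr (by simpa using hw)
  subst h
  simp [shortcut, List.filter_append, List.filter_cons, hx, hy, hw']

end AuxLists

section MoreAux

lemma gridCost_nonneg (k : ℕ) (u w : Fin k × Fin k) : 0 ≤ gridCost k u w := by
  unfold gridCost
  split
  · norm_num
  · split <;> positivity

lemma card_lt_pairs (n : ℕ) :
    2 * (Finset.univ.filter (fun q : Fin n × Fin n => q.1 < q.2)).card = n * n - n := by
  classical
  set Q := Finset.univ.filter (fun q : Fin n × Fin n => q.1 < q.2) with hQ
  set Q' := Finset.univ.filter (fun q : Fin n × Fin n => q.2 < q.1) with hQ'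
  have hun : Q ∪ Q' = (Finset.univ : Finset (Fin n)).offDiag := by
    ext q
    simp only [hQ, hQ', Finset.mem_union, Finset.mem_filter, Finset.mem_univ, true_and,
      Finset.mem_offDiag]
    exact ⟨fun h => by rcases h with h | h; exacts [h.ne, h.ne'],
      fun h => Ne.lt_or_gt h⟩
  have hdisj : Disjoint Q Q' := by
    rw [Finset.disjoint_left]
    intro q hq hq'
    simp only [hQ, hQ', Finset.mem_filter] at hq hq'
    exact absurd hq'.2 (not_lt.mpr hq.2.le)
  have himg : Q' = Q.image Prod.swap := by
    ext q
    simp only [hQ, hQ', Finset.mem_filter, Finset.mem_univ, true_and, Finset.mem_image]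
    constructor
    · intro h
      exact ⟨q.swap, by simpa using h, Prod.swap_swap q⟩
    · rintro ⟨r, hr, rfl⟩
      simpa using hr
  have hcard : Q'.card = Q.card := by
    rw [himg]; exact Finset.card_image_of_injective _ Prod.swap_injective
  have hoff : ((Finset.univ : Finset (Fin n)).offDiag).card = n * n - n := by
    rw [Finset.offDiag_card]
    simp [Finset.card_univ]
  have hcu := Finset.card_union_of_disjoint hdisj
  rw [hun, hoff] at hcu
  omega

end MoreAux


lemma before_sublist {W : Type*} (c : List W) (a b : Fin c.length) (hab : a < b) :
    ∃ mid : List W, (c.get a :: (mid ++ [c.get b])).Sublist c := by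
  refine ⟨(List.drop ((a:ℕ)+1) c).take ((b:ℕ) - ((a:ℕ)+1)), ?_⟩
  have hab' : (a:ℕ) < (b:ℕ) := hab
  have e0 : List.drop ((a:ℕ)+1) c
      = (List.drop ((a:ℕ)+1) c).take ((b:ℕ) - ((a:ℕ)+1))
        ++ (c.get b :: List.drop ((b:ℕ)+1) c) := by
    have h1 : List.drop ((b:ℕ) - ((a:ℕ)+1)) (List.drop ((a:ℕ)+1) c)
        = c.get b :: List.drop ((b:ℕ)+1) c := by
      rw [List.drop_drop]
      have h2 : ((a:ℕ)+1) + ((b:ℕ) - ((a:ℕ)+1)) = (b:ℕ) := by omega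
      rw [h2, List.drop_eq_getElem_cons b.isLt, List.get_eq_getElem]
    conv_lhs => rw [← List.take_append_drop ((b:ℕ) - ((a:ℕ)+1))
      (List.drop ((a:ℕ)+1) c), h1]
  have e1 : List.drop (a:ℕ) c
      = c.get a :: ((List.drop ((a:ℕ)+1) c).take ((b:ℕ) - ((a:ℕ)+1))
        ++ (c.get b :: List.drop ((b:ℕ)+1) c)) := by
    rw [← e0, List.drop_eq_getElem_cons a.isLt, List.get_eq_getElem]
  have h2 : (c.get a :: ((List.drop ((a:ℕ)+1) c).take ((b:ℕ) - ((a:ℕ)+1))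
      ++ [c.get b])).Sublist
      (c.get a :: ((List.drop ((a:ℕ)+1) c).take ((b:ℕ) - ((a:ℕ)+1))
        ++ (c.get b :: List.drop ((b:ℕ)+1) c))) := by
    apply List.Sublist.cons₂
    exact List.Sublist.append_left ((List.nil_sublist _).cons₂ (a := c.get b)) _
  refine h2.trans ?_
  rw [← e1]
  exact List.drop_sublist _ _

set_option maxHeartbeats 1000000 in
lemma key_pair (k : ℕ) (hk : 5 ≤ k) (j : Fin k) (T : List (Fin k × Fin k))
    (hTnd : T.Nodup) (s m : ℕ)
    (hseglen : ((T.rotate s).take m).length ≤ 4 * k)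
    (x y : Fin k × Fin k) (hx2 : x.2 = j) (hy2 : y.2 = j)
    (hsub : ∃ mid : List (Fin k × Fin k),
      (x :: (mid ++ [y])).Sublist ((T.rotate s).take m)) :
    (1/(k:ℝ)) * (1/(k:ℝ)) * (1 - 1/(k:ℝ))^(4*k) * k ≤
      edgeProb (fun _ => 1/(k:ℝ)) T (x, y) * gridCost k x y := by
  classical
  set L : List (Fin k × Fin k) := T.rotate s with hL
  set seg : List (Fin k × Fin k) := L.take m with hseg
  have hLnd : L.Nodup := List.nodup_rotate.mpr hTnd
  have hsegnd : seg.Nodup := (List.take_sublist m L).nodup hLnd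
  have hk0 : (0:ℝ) < (k:ℝ) := by
    have : (0:ℕ) < k := by omega
    exact_mod_cast this
  have hp0 : ∀ v : Fin k × Fin k, 0 ≤ (fun _ : Fin k × Fin k => 1/(k:ℝ)) v :=
    fun _ => by positivity
  have hp1 : ∀ v : Fin k × Fin k, (fun _ : Fin k × Fin k => 1/(k:ℝ)) v ≤ 1 :=
    fun _ => by
      simp only []
      rw [div_le_one hk0]
      have : (1:ℕ) ≤ k := by omega
      exact_mod_cast this
  have hq0 : (0:ℝ) ≤ 1 - 1/(k:ℝ) := by
    have h1 : 1/(k:ℝ) ≤ 1 := by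
      rw [div_le_one hk0]
      have : (1:ℕ) ≤ k := by omega
      exact_mod_cast this
    linarith
  have hq1 : 1 - 1/(k:ℝ) ≤ 1 := by
    have : (0:ℝ) ≤ 1/(k:ℝ) := by positivity
    linarith
  obtain ⟨mid, hsub1⟩ := hsub
  obtain ⟨u, v₁, hseq1, hsub2⟩ := cons_sublist_decomp hsub1
  have hsub3 : [y].Sublist v₁ := (List.sublist_append_right mid [y]).trans hsub2
  obtain ⟨w, v₂, hveq, -⟩ := cons_sublist_decomp hsub3
  have hsegdec : seg = u ++ x :: (w ++ y :: v₂) := by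
    rw [hseq1, hveq]
  have hnd2 : (x :: (w ++ y :: v₂)).Nodup := by
    have hnd0 := hsegnd
    rw [hsegdec, List.nodup_append] at hnd0
    exact hnd0.2.1
  have hxny : x ∉ w ++ y :: v₂ := (List.nodup_cons.mp hnd2).1
  have hnd3 : (w ++ y :: v₂).Nodup := (List.nodup_cons.mp hnd2).2
  have hxy : x ≠ y := by
    intro hh
    exact hxny (by rw [hh]; exact List.mem_append_right _ List.mem_cons_self)
  have hxw : x ∉ w := fun hh => hxny (List.mem_append_left _ hh)
  have hyw : y ∉ w := by
    rw [List.nodup_append] at hnd3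
    exact fun hh => hnd3.2.2 y hh y List.mem_cons_self rfl
  have hwlen : w.length ≤ 4 * k := by
    have hlen := congrArg List.length hsegdec
    simp [List.length_append] at hlen
    omega
  have hBcard : (w.toFinset : Finset (Fin k × Fin k)).card ≤ 4 * k :=
    le_trans (List.toFinset_card_le w) hwlen
  have hLdec : L = u ++ x :: (w ++ y :: (v₂ ++ L.drop m)) := by
    conv_lhs => rw [← List.take_append_drop m L]
    rw [← hseg, hsegdec]
    simp [List.append_assoc]
  have himp : ∀ A : Finset (Fin k × Fin k),
      x ∈ A → y ∈ A → Disjoint w.toFinset A →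
      (x, y) ∈ (shortcut T A).zip ((shortcut T A).rotate 1) := by
    intro A hxA hyA hdisj
    obtain ⟨u', v', h1⟩ := shortcut_decomp hLdec hxA hyA
      (fun z hz hzA => Finset.disjoint_left.mp hdisj (List.mem_toFinset.mpr hz) hzA)
    obtain ⟨t, ht⟩ := shortcut_rotate T A s
    apply mem_edges_rotate (t := t)
    rw [← ht]
    rw [hL] at h1
    exact mem_edges_of_append h1
  have hprob := edgeProb_ge (fun _ => 1/(k:ℝ)) hp0 hp1 T x y
    w.toFinset hxy (by simpa using hxw) (by simpa using hyw) himp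
  have hprob2 : (1/(k:ℝ)) * (1/(k:ℝ)) * (1 - 1/(k:ℝ))^(w.toFinset.card) ≤
      edgeProb (fun _ => 1/(k:ℝ)) T (x, y) := by
    simpa [Finset.prod_const] using hprob
  have hpow : (1 - 1/(k:ℝ))^(4*k) ≤ (1 - 1/(k:ℝ))^(w.toFinset.card) :=
    pow_le_pow_of_le_one hq0 hq1 hBcard
  have hcost : gridCost k x y = k := by
    have h2 : x.2 = y.2 := by rw [hx2, hy2]
    unfold gridCost
    rw [if_neg hxy, if_pos h2]
  rw [hcost]
  refine mul_le_mul_of_nonneg_right ?_ (le_of_lt hk0)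
  calc (1/(k:ℝ)) * (1/(k:ℝ)) * (1 - 1/(k:ℝ))^(4*k)
      ≤ (1/(k:ℝ)) * (1/(k:ℝ)) * (1 - 1/(k:ℝ))^(w.toFinset.card) := by
        apply mul_le_mul_of_nonneg_left hpow (by positivity)
    _ ≤ edgeProb (fun _ => 1/(k:ℝ)) T (x, y) := hprob2

set_option maxHeartbeats 1000000 in
lemma final_glue (k n Qc : ℕ) (hk : 5 ≤ k) (hn : 2 ≤ n)
    (hQ : 2 * Qc = n * n - n) :
    (n:ℝ)^2 / (2^7 * Real.exp 1 ^ 4 * (k:ℝ)) ≤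
      (Qc:ℝ) * ((1/(k:ℝ)) * (1/(k:ℝ)) * (1 - 1/(k:ℝ))^(4*k) * (k:ℝ)) := by
  have hk0 : (0:ℝ) < (k:ℝ) := by
    have : (0:ℕ) < k := by omega
    exact_mod_cast this
  have hk5R : (5:ℝ) ≤ (k:ℝ) := by exact_mod_cast hk
  have hN2 : (2:ℝ) ≤ (n : ℝ) := by exact_mod_cast hn
  have hle : n ≤ n * n := by nlinarith [hn]
  have hQR : ((n:ℝ))^2/4 ≤ (Qc : ℝ) := by
    have h3 : ((2 * Qc : ℕ) : ℝ) = ((n * n - n : ℕ) : ℝ) := by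
      exact_mod_cast congrArg (Nat.cast : ℕ → ℝ) hQ
    rw [Nat.cast_sub hle] at h3
    push_cast at h3
    nlinarith [h3, hN2]
  have hexp : (4/5:ℝ)^4 / (Real.exp 1)^4 ≤ (1 - 1/(k:ℝ))^(4*k) := by
    have hK1 : (0:ℝ) < (k:ℝ) - 1 := by linarith
    have h1 : (k:ℝ)/((k:ℝ)-1) ≤ Real.exp (1/((k:ℝ)-1)) := by
      have h2 := Real.add_one_le_exp (1/((k:ℝ)-1))
      have h3 : (k:ℝ)/((k:ℝ)-1) = 1/((k:ℝ)-1) + 1 := by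
        field_simp
        ring
      rw [h3]; exact h2
    have h7 : (0:ℝ) < Real.exp (1/((k:ℝ)-1)) := Real.exp_pos _
    have h4 : Real.exp (-(1/((k:ℝ)-1))) ≤ 1 - 1/(k:ℝ) := by
      have h5 : (k:ℝ) ≤ Real.exp (1/((k:ℝ)-1)) * ((k:ℝ)-1) :=
        (div_le_iff₀ hK1).mp h1
      have h6 : 1 - 1/(k:ℝ) = ((k:ℝ)-1)/(k:ℝ) := by field_simp
      rw [Real.exp_neg, h6, inv_eq_one_div, div_le_div_iff₀ h7 hk0]
      nlinarith [h5]
    have h8 : Real.exp (-(1:ℝ)) ≤ (1 - 1/(k:ℝ))^(k-1) := by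
      have h9 := pow_le_pow_left₀ (Real.exp_pos _).le h4 (k-1)
      rw [← Real.exp_nat_mul] at h9
      have h10 : ((k-1:ℕ):ℝ) * (-(1/((k:ℝ)-1))) = -1 := by
        have h11 : ((k-1:ℕ):ℝ) = (k:ℝ) - 1 := by
          rw [Nat.cast_sub (by omega : 1 ≤ k)]
          norm_num
        rw [h11]
        field_simp
      rw [h10] at h9
      exact h9
    have h11 : (4/5:ℝ) ≤ 1 - 1/(k:ℝ) := by
      have h12 : 1/(k:ℝ) ≤ 1/5 := by
        apply one_div_le_one_div_of_le (by norm_num) hk5R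
      linarith
    have h13 : (1 - 1/(k:ℝ))^(4*k) = ((1 - 1/(k:ℝ))^(k-1))^4 * (1 - 1/(k:ℝ))^4 := by
      rw [← pow_mul, ← pow_add]
      congr 1
      omega
    rw [h13]
    have h14 : (Real.exp (-(1:ℝ)))^4 ≤ ((1 - 1/(k:ℝ))^(k-1))^4 :=
      pow_le_pow_left₀ (Real.exp_pos _).le h8 4
    have h15 : (4/5:ℝ)^4 ≤ (1 - 1/(k:ℝ))^4 := pow_le_pow_left₀ (by norm_num) h11 4
    have h16 : (Real.exp (-(1:ℝ)))^4 = 1/(Real.exp 1)^4 := by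
      rw [Real.exp_neg, inv_pow, inv_eq_one_div]
    calc (4/5:ℝ)^4 / (Real.exp 1)^4 = (1/(Real.exp 1)^4) * (4/5)^4 := by ring
      _ ≤ ((1 - 1/(k:ℝ))^(k-1))^4 * (1 - 1/(k:ℝ))^4 := by
          rw [← h16]
          exact mul_le_mul h14 h15 (by positivity) (by positivity)
  have hc0 : (1/(k:ℝ)) * (1/(k:ℝ)) * (1 - 1/(k:ℝ))^(4*k) * k
      = (1 - 1/(k:ℝ))^(4*k) / k := by
    have hkne : (k:ℝ) ≠ 0 := ne_of_gt hk0
    field_simp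
  rw [hc0]
  have hEpos : (0:ℝ) < Real.exp 1 ^ 4 := by positivity
  have step1 : ((n:ℝ))^2 / (2^7 * Real.exp 1 ^ 4 * (k:ℝ)) ≤
      (((n:ℝ))^2/4) * (((4/5:ℝ)^4 / (Real.exp 1)^4) / k) := by
    have hr : (((n:ℝ))^2/4) * (((4/5:ℝ)^4 / (Real.exp 1)^4) / k)
        = ((n:ℝ)^2 * (4/5:ℝ)^4) / (4 * Real.exp 1 ^ 4 * k) := by
      ring
    rw [hr, div_le_div_iff₀ (by positivity) (by positivity)]
    have hX : (0:ℝ) ≤ (n:ℝ)^2 * Real.exp 1 ^ 4 * k := by positivity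
    nlinarith [hX]
  calc ((n:ℝ))^2 / (2^7 * Real.exp 1 ^ 4 * (k:ℝ))
      ≤ (((n:ℝ))^2/4) * (((4/5:ℝ)^4 / (Real.exp 1)^4) / k) := step1
    _ ≤ (Qc : ℝ) * ((1 - 1/(k:ℝ))^(4*k) / k) := by
        exact mul_le_mul hQR ((div_le_div_iff_of_pos_right hk0).mpr hexp)
          (by positivity) (by positivity)

set_option maxHeartbeats 1000000 in
/-- for a saturated interval `I` of a tour `T` on the asymmetric grid instance
(consecutive cyclic segment with `|I| ≤ 4k` and `|I ∩ C_j| ≥ √k`), the expected short-cut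
cost contributed by the edges of `E_j[I]` is at least `|I ∩ C_j|²/(2⁷·e⁴·k)`. -/
theorem statement3 (k : ℕ) (hk : 5 ≤ k) (hsqrt : Real.sqrt k ≤ (k : ℝ))
    (j : Fin k) (T : List (Fin k × Fin k)) (hT : IsTour Finset.univ T)
    (I : Finset (Fin k × Fin k))
    (hIinterval : ∃ s m : ℕ, I = ((T.rotate s).take m).toFinset)
    (hIcard : I.card ≤ 4 * k)
    (hIsat : Real.sqrt k ≤ ((I ∩ gridColumn k j).card : ℝ)) :
    ((I ∩ gridColumn k j).card : ℝ) ^ 2 / (2 ^ 7 * Real.exp 1 ^ 4 * k) ≤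
      ∑ e ∈ ((I ∩ gridColumn k j) ×ˢ I).filter (fun e => e.1 ≠ e.2),
        edgeProb (fun _ => 1 / (k : ℝ)) T e * gridCost k e.1 e.2 := by
  classical
  obtain ⟨hTnd, -⟩ := hT
  obtain ⟨s, m, hI⟩ := hIinterval
  set L : List (Fin k × Fin k) := T.rotate s with hL
  set seg : List (Fin k × Fin k) := L.take m with hseg
  have hLnd : L.Nodup := List.nodup_rotate.mpr hTnd
  have hsegnd : seg.Nodup := (List.take_sublist m L).nodup hLnd
  set cols : List (Fin k × Fin k) := seg.filter (fun v => v.2 = j) with hcols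
  have hcolsub : cols.Sublist seg := List.filter_sublist
  have hcolsnd : cols.Nodup := hcolsub.nodup hsegnd
  have hcolsfin : cols.toFinset = I ∩ gridColumn k j := by
    rw [hcols, List.toFinset_filter, hI]
    ext v
    simp [gridColumn]
  have hIcard' : I.card = seg.length := by
    rw [hI, List.toFinset_card_of_nodup hsegnd]
  have hseglen : seg.length ≤ 4 * k := hIcard' ▸ hIcard
  have hcardI : (I ∩ gridColumn k j).card = cols.length := by
    rw [← hcolsfin, List.toFinset_card_of_nodup hcolsnd]
  rw [hcardI]
  rw [hcardI] at hIsat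
  have hk0 : (0:ℝ) < (k:ℝ) := by
    have : (0:ℕ) < k := by omega
    exact_mod_cast this
  have hk5R : (5:ℝ) ≤ (k:ℝ) := by exact_mod_cast hk
  have hn₀2 : 2 ≤ cols.length := by
    have h4 : (2:ℝ) ≤ Real.sqrt k := by
      rw [Real.le_sqrt (by norm_num) (by positivity)]
      have : (4:ℝ) ≤ (k:ℝ) := by
        have : (4:ℕ) ≤ k := by omega
        exact_mod_cast this
      nlinarith
    have h5 : (2:ℝ) ≤ (cols.length : ℝ) := le_trans h4 hIsat
    exact_mod_cast h5
  have hp0 : ∀ v : Fin k × Fin k, 0 ≤ (fun _ : Fin k × Fin k => 1/(k:ℝ)) v :=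
    fun _ => by positivity
  have hp1 : ∀ v : Fin k × Fin k, (fun _ : Fin k × Fin k => 1/(k:ℝ)) v ≤ 1 :=
    fun _ => by
      simp only []
      rw [div_le_one hk0]
      linarith
  have hq0 : (0:ℝ) ≤ 1 - 1/(k:ℝ) := by
    have h1 : 1/(k:ℝ) ≤ 1 := by rw [div_le_one hk0]; linarith
    linarith
  have hq1 : 1 - 1/(k:ℝ) ≤ 1 := by
    have : (0:ℝ) ≤ 1/(k:ℝ) := by positivity
    linarith
  have hmem : ∀ (i : Fin cols.length), (cols.get i).2 = j := by
    intro i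
    have hmi : cols.get i ∈ seg.filter (fun v => v.2 = j) := by
      rw [← hcols]; exact List.get_mem _ _
    rw [List.mem_filter] at hmi
    simpa using hmi.2
  have key : ∀ (a b : Fin cols.length), a < b →
      (1/(k:ℝ)) * (1/(k:ℝ)) * (1 - 1/(k:ℝ))^(4*k) * k ≤
        edgeProb (fun _ => 1/(k:ℝ)) T (cols.get a, cols.get b) *
          gridCost k (cols.get a) (cols.get b) := by
    intro a b hab
    obtain ⟨mid, hmid⟩ := before_sublist cols a b hab
    exact key_pair k hk j T hTnd s m hseglen (cols.get a) (cols.get b)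
      (hmem a) (hmem b) ⟨mid, hmid.trans hcolsub⟩
  -- summation
  set Q : Finset (Fin cols.length × Fin cols.length) :=
    Finset.univ.filter (fun q => q.1 < q.2) with hQdef
  have hQcard : 2 * Q.card = cols.length * cols.length - cols.length := by
    rw [hQdef]; exact card_lt_pairs _
  have hEp : ∀ e : (Fin k × Fin k) × (Fin k × Fin k),
      0 ≤ edgeProb (fun _ => 1/(k:ℝ)) T e := by
    intro e
    apply apExpect_nonneg hp0 hp1
    intro A
    split <;> norm_num
  have hginjQ : ∀ q1 ∈ Q, ∀ q2 ∈ Q,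
      (fun q : Fin cols.length × Fin cols.length => (cols.get q.1, cols.get q.2)) q1 =
      (fun q : Fin cols.length × Fin cols.length => (cols.get q.1, cols.get q.2)) q2 →
      q1 = q2 := by
    intro q1 _ q2 _ h
    have h1 : cols.get q1.1 = cols.get q2.1 := congrArg Prod.fst h
    have h2 : cols.get q1.2 = cols.get q2.2 := congrArg Prod.snd h
    exact Prod.ext_iff.mpr ⟨hcolsnd.get_inj_iff.mp h1, hcolsnd.get_inj_iff.mp h2⟩
  have himage : Q.image (fun q : Fin cols.length × Fin cols.length =>
      (cols.get q.1, cols.get q.2)) ⊆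
      ((I ∩ gridColumn k j) ×ˢ I).filter (fun e => e.1 ≠ e.2) := by
    intro e he
    rw [Finset.mem_image] at he
    obtain ⟨q, hq, rfl⟩ := he
    rw [hQdef, Finset.mem_filter] at hq
    have hmem1 : cols.get q.1 ∈ I ∩ gridColumn k j := by
      rw [← hcolsfin, List.mem_toFinset]
      exact List.get_mem _ _
    have hmem2 : cols.get q.2 ∈ I := by
      have h2 : cols.get q.2 ∈ I ∩ gridColumn k j := by
        rw [← hcolsfin, List.mem_toFinset]
        exact List.get_mem _ _
      exact Finset.inter_subset_left h2
    rw [Finset.mem_filter, Finset.mem_product]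
    refine ⟨⟨hmem1, hmem2⟩, ?_⟩
    intro hh
    exact absurd (hcolsnd.get_inj_iff.mp hh) (ne_of_lt hq.2)
  have hsum1 : ∑ _q ∈ Q, ((1/(k:ℝ)) * (1/(k:ℝ)) * (1 - 1/(k:ℝ))^(4*k) * k) ≤
      ∑ q ∈ Q, (edgeProb (fun _ => 1/(k:ℝ)) T (cols.get q.1, cols.get q.2) *
        gridCost k (cols.get q.1) (cols.get q.2)) := by
    apply Finset.sum_le_sum
    intro q hq
    rw [hQdef, Finset.mem_filter] at hq
    exact key q.1 q.2 hq.2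
  have hsum2 : ∑ q ∈ Q, (edgeProb (fun _ => 1/(k:ℝ)) T (cols.get q.1, cols.get q.2) *
        gridCost k (cols.get q.1) (cols.get q.2))
      = ∑ e ∈ Q.image (fun q : Fin cols.length × Fin cols.length =>
          (cols.get q.1, cols.get q.2)),
          edgeProb (fun _ => 1/(k:ℝ)) T e * gridCost k e.1 e.2 :=
    (Finset.sum_image
      (f := fun e => edgeProb (fun _ => 1/(k:ℝ)) T e * gridCost k e.1 e.2) hginjQ).symm
  have hsum3 : ∑ e ∈ Q.image (fun q : Fin cols.length × Fin cols.length =>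
          (cols.get q.1, cols.get q.2)),
          edgeProb (fun _ => 1/(k:ℝ)) T e * gridCost k e.1 e.2 ≤
      ∑ e ∈ ((I ∩ gridColumn k j) ×ˢ I).filter (fun e => e.1 ≠ e.2),
        edgeProb (fun _ => 1/(k:ℝ)) T e * gridCost k e.1 e.2 :=
    Finset.sum_le_sum_of_subset_of_nonneg himage
      (fun e _ _ => mul_nonneg (hEp e) (gridCost_nonneg k e.1 e.2))
  have hsumc : ∑ _q ∈ Q, ((1/(k:ℝ)) * (1/(k:ℝ)) * (1 - 1/(k:ℝ))^(4*k) * k)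
      = (Q.card : ℝ) * ((1/(k:ℝ)) * (1/(k:ℝ)) * (1 - 1/(k:ℝ))^(4*k) * k) := by
    rw [Finset.sum_const, nsmul_eq_mul]
  have hglue := final_glue k cols.length Q.card hk hn₀2 hQcard
  calc ((cols.length:ℝ))^2 / (2^7 * Real.exp 1 ^ 4 * (k:ℝ))
      ≤ (Q.card:ℝ) * ((1/(k:ℝ)) * (1/(k:ℝ)) * (1 - 1/(k:ℝ))^(4*k) * (k:ℝ)) := hglue
    _ = ∑ _q ∈ Q, ((1/(k:ℝ)) * (1/(k:ℝ)) * (1 - 1/(k:ℝ))^(4*k) * k) := hsumc.symm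
    _ ≤ _ := le_trans hsum1 (le_of_eq hsum2)
    _ ≤ _ := hsum3

end
end

section
/- Let (V,c,p) be an instance of Asymmetric A Priori TSP with a depot d ∈ V (i.e., p(d) = 1) and with p_min := min_{v∈V} p(v) > 0. Let α ≥ 1 and let T be a tour on V with c(T) ≤ α · TSP(V,c). Then c(T) ≤ α · ⌈1/p_min⌉ · E_{A∼p}[TSP(A,c)]. -/
noncomputable section

/-- The cost of a tour given as a cyclic list: the sum of `c` over consecutive pairs
(cyclically). -/
def cycCost {V : Type*} (c : V → V → ℝ) (l : List V) : ℝ :=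
  (List.zipWith c l (l.rotate 1)).sum

/-- The minimum cost of a tour on `A` with respect to `c`. -/
def TSP {V : Type*} [DecidableEq V] (c : V → V → ℝ) (A : Finset V) : ℝ :=
  sInf {x : ℝ | ∃ l : List V, IsTour A l ∧ x = cycCost c l}

/-!
Independently for every vertex `v`, put `v` either into all of `k` copies of the instance or into
exactly one of them, with weights making `v` lie in each fixed copy with probability `p v`; this is
possible exactly when `k * p v ≥ 1`, whence `k = ⌈1 / p_min⌉`. Each copy is then a sample `A ∼ p`,
the copies cover `V`, and all of them contain the depot. Gluing optimal tours of the copies at the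
depot and shortcutting repeated vertices (triangle inequality) gives `TSP(V) ≤ Σ_j TSP(copy j)`,
and taking expectations `TSP(V) ≤ k · E[TSP(A)]`.
-/

section Tours

variable {V : Type*}

def pathCost (c : V → V → ℝ) : V → List V → ℝ
  | _, [] => 0
  | x, y :: l => c x y + pathCost c y l

theorem pathCost_append (c : V → V → ℝ) (x : V) (l r : List V) :
    pathCost c x (l ++ r) = pathCost c x l + pathCost c (l.getLastD x) r := by
  induction l generalizing x with
  | nil => simp [pathCost]
  | cons y l ih => simp only [List.cons_append, pathCost, ih, List.getLastD_cons, add_assoc]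

theorem sum_zipWith_eq_pathCost (c : V → V → ℝ) (x z : V) (l : List V) :
    (List.zipWith c (x :: l) (l ++ [z])).sum = pathCost c x (l ++ [z]) := by
  induction l generalizing x with
  | nil => simp [pathCost]
  | cons y l ih => simp [pathCost, ← ih]

theorem cycCost_cons (c : V → V → ℝ) (x : V) (l : List V) :
    cycCost c (x :: l) = pathCost c x (l ++ [x]) := by
  rw [cycCost, List.rotate_cons_succ, List.rotate_zero, sum_zipWith_eq_pathCost]

theorem cycCost_rotate (c : V → V → ℝ) (l : List V) (n : ℕ) :
    cycCost c (l.rotate n) = cycCost c l := by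
  rw [cycCost, cycCost, List.rotate_rotate, add_comm, ← List.rotate_rotate,
    ← List.zipWith_rotate_distrib _ _ _ _ (List.length_rotate l 1).symm,
    (List.rotate_perm _ n).sum_eq]

theorem cycCost_cons_append_cons (c : V → V → ℝ) (d : V) (xs ys : List V) :
    cycCost c (d :: (xs ++ d :: ys)) = cycCost c (d :: xs) + cycCost c (d :: ys) := by
  simp only [cycCost_cons, List.append_assoc, List.cons_append, pathCost_append, pathCost]
  ring

theorem pathCost_le_pathCost_cons {c : V → V → ℝ} (htri : ∀ x y z, c x z ≤ c x y + c y z)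
    (x a : V) {m : List V} (hm : m ≠ []) :
    pathCost c x m ≤ pathCost c x (a :: m) := by
  obtain ⟨y, m, rfl⟩ := List.exists_cons_of_ne_nil hm
  simp only [pathCost]
  linarith [htri x a y]

theorem pathCost_le_of_sublist {c : V → V → ℝ} (htri : ∀ x y z, c x z ≤ c x y + c y z)
    {l₁ l₂ : List V} (h : l₁.Sublist l₂) (x z : V) :
    pathCost c x (l₁ ++ [z]) ≤ pathCost c x (l₂ ++ [z]) := by
  induction h generalizing x with
  | slnil => rfl
  | cons a _ ih => exact (ih x).trans (pathCost_le_pathCost_cons htri x a (by simp))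
  | cons_cons a _ ih => simpa [pathCost] using ih a

variable [DecidableEq V]

theorem IsTour.rotate {A : Finset V} {l : List V} (h : IsTour A l) (n : ℕ) :
    IsTour A (l.rotate n) :=
  ⟨List.nodup_rotate.mpr h.1, (List.toFinset_eq_of_perm _ _ (List.rotate_perm l n)).trans h.2⟩

theorem IsTour.exists_cons_eq (c : V → V → ℝ) {A : Finset V} {l : List V} (h : IsTour A l) {d : V}
    (hd : d ∈ A) :
    ∃ xs, IsTour A (d :: xs) ∧ cycCost c (d :: xs) = cycCost c l := by
  obtain ⟨s, t, rfl⟩ := List.append_of_mem (List.mem_toFinset.mp (h.2 ▸ hd))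
  refine ⟨t ++ s, ?_, ?_⟩ <;> rw [← List.cons_append, ← List.rotate_append_length_eq]
  exacts [h.rotate _, cycCost_rotate c _ _]

theorem exists_tour_cycCost_le {c : V → V → ℝ} (htri : ∀ x y z, c x z ≤ c x y + c y z) (d : V)
    (l : List V) :
    ∃ t, IsTour (insert d l.toFinset) t ∧ cycCost c t ≤ cycCost c (d :: l) := by
  refine ⟨d :: l.dedup.erase d, ⟨?_, ?_⟩, ?_⟩
  · exact List.nodup_cons.mpr ⟨(List.nodup_dedup l).not_mem_erase, (List.nodup_dedup l).erase d⟩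
  · ext v; by_cases hv : v = d <;> simp [hv, List.mem_erase_of_ne]
  · rw [cycCost_cons, cycCost_cons]
    exact pathCost_le_of_sublist htri (List.erase_sublist.trans (List.dedup_sublist l)) d d

theorem finite_tourCosts (c : V → V → ℝ) (A : Finset V) :
    {x : ℝ | ∃ l : List V, IsTour A l ∧ x = cycCost c l}.Finite := by
  refine ((A.toList.permutations.finite_toSet).image (cycCost c)).subset ?_
  rintro x ⟨l, hl, rfl⟩
  refine ⟨l, List.mem_permutations.mpr ?_, rfl⟩
  exact List.perm_of_nodup_nodup_toFinset_eq hl.1 A.nodup_toList (by rw [hl.2, A.toList_toFinset])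

theorem TSP_le_cycCost (c : V → V → ℝ) {A : Finset V} {l : List V} (hl : IsTour A l) :
    TSP c A ≤ cycCost c l :=
  csInf_le (finite_tourCosts c A).bddBelow ⟨l, hl, rfl⟩

theorem exists_tour_cycCost_eq_TSP (c : V → V → ℝ) (A : Finset V) :
    ∃ l, IsTour A l ∧ cycCost c l = TSP c A := by
  have hne : {x : ℝ | ∃ l : List V, IsTour A l ∧ x = cycCost c l}.Nonempty :=
    ⟨_, A.toList, ⟨A.nodup_toList, A.toList_toFinset⟩, rfl⟩
  obtain ⟨l, hl, h⟩ := hne.csInf_mem (finite_tourCosts c A)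
  exact ⟨l, hl, h.symm⟩

theorem TSP_union_le {c : V → V → ℝ} (htri : ∀ x y z, c x z ≤ c x y + c y z) {X Y : Finset V}
    {d : V} (hdX : d ∈ X) (hdY : d ∈ Y) :
    TSP c (X ∪ Y) ≤ TSP c X + TSP c Y := by
  obtain ⟨lX, hlX, hX⟩ := exists_tour_cycCost_eq_TSP c X
  obtain ⟨lY, hlY, hY⟩ := exists_tour_cycCost_eq_TSP c Y
  obtain ⟨xs, hxs, hxsX⟩ := hlX.exists_cons_eq c hdX
  obtain ⟨ys, hys, hysY⟩ := hlY.exists_cons_eq c hdY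
  obtain ⟨t, ht, htc⟩ := exists_tour_cycCost_le htri d (xs ++ d :: ys)
  have hcover : insert d (xs ++ d :: ys).toFinset = X ∪ Y := by
    rw [← hxs.2, ← hys.2]; ext v; simp
  calc TSP c (X ∪ Y) ≤ cycCost c t := TSP_le_cycCost c (hcover ▸ ht)
    _ ≤ cycCost c (d :: (xs ++ d :: ys)) := htc
    _ = TSP c X + TSP c Y := by rw [cycCost_cons_append_cons, hxsX, hysY, hX, hY]

theorem TSP_biUnion_le {c : V → V → ℝ} (htri : ∀ x y z, c x z ≤ c x y + c y z) {ι : Type*}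
    [DecidableEq ι] {s : Finset ι} (hs : s.Nonempty) (B : ι → Finset V) {d : V}
    (hd : ∀ i ∈ s, d ∈ B i) :
    TSP c (s.biUnion B) ≤ ∑ i ∈ s, TSP c (B i) := by
  induction hs using Finset.Nonempty.cons_induction with
  | singleton i => simp
  | cons i s hi hs ih =>
    rw [Finset.cons_eq_insert, Finset.biUnion_insert, Finset.sum_insert hi]
    obtain ⟨j, hj⟩ := hs
    have hdi := hd i (Finset.mem_cons_self i s)
    have hds : d ∈ s.biUnion B := Finset.mem_biUnion.mpr ⟨j, hj, hd j (Finset.mem_cons_of_mem hj)⟩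
    have := ih fun j hj => hd j (Finset.mem_cons_of_mem hj)
    linarith [TSP_union_le htri hdi hds]

end Tours

section Coupling

variable {V : Type*} [Fintype V] [DecidableEq V]

theorem sum_prod_mul_eq_apExpect {β : Type*} [Fintype β] [DecidableEq β] (w : V → β → ℝ)
    (s : Finset β) {p : V → ℝ} (hw : ∀ v, ∑ b, w v b = 1) (hs : ∀ v, ∑ b ∈ s, w v b = p v)
    (f : Finset V → ℝ) :
    ∑ ω : V → β, (∏ v, w v (ω v)) * f {v | ω v ∈ s} = apExpect p f := by
  rw [apExpect, ← Finset.sum_fiberwise Finset.univ (fun ω : V → β => ({v | ω v ∈ s} : Finset V))]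
  refine Finset.sum_congr rfl fun A _ => ?_
  have hfiber : ({ω | ({v | ω v ∈ s} : Finset V) = A} : Finset (V → β)) =
      Fintype.piFinset fun v => if v ∈ A then s else sᶜ := by
    ext ω
    simp only [Finset.mem_filter, Finset.mem_univ, true_and, Fintype.mem_piFinset, Finset.ext_iff]
    refine forall_congr' fun v => ?_
    split_ifs with hv <;> simp [hv]
  have hcompl : ∀ v, ∑ b ∈ sᶜ, w v b = 1 - p v := fun v => by
    rw [← hw v, ← hs v, ← Finset.sum_compl_add_sum s]; ring
  rw [Finset.sum_congr rfl fun ω hω => by rw [(Finset.mem_filter.mp hω).2], ← Finset.sum_mul,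
    hfiber, ← Finset.prod_univ_sum]
  have hv : ∀ v, ∑ b ∈ (if v ∈ A then s else sᶜ), w v b = if v ∈ A then p v else 1 - p v :=
    fun v => by split_ifs; exacts [hs v, hcompl v]
  simp only [hv, Finset.prod_ite, Finset.filter_mem_eq_inter, Finset.univ_inter, Finset.filter_not,
    ← Finset.compl_eq_univ_sdiff]

/-- Outcome `none`: the vertex joins all `k` copies; `some j`: it joins only copy `j`. Either way
it lies in a fixed copy with weight `q`. For `k = 1` the division by `0` gives the weights
`(q, 0)`, still a distribution since then `1 ≤ k * q` forces `q = 1`. -/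
def splitWeight (k : ℕ) (q : ℝ) : Option (Fin k) → ℝ
  | none => q - (1 - q) / (k - 1)
  | some _ => (1 - q) / (k - 1)

section SplitWeight

variable {k : ℕ} {q : ℝ}

theorem splitWeight_nonneg (hq : 1 ≤ k * q) (hq1 : q ≤ 1) (b : Option (Fin k)) :
    0 ≤ splitWeight k q b := by
  rcases Nat.lt_or_ge k 2 with hk | hk
  · interval_cases k
    · simp at hq; linarith
    · cases b <;> simp [splitWeight] at hq ⊢; linarith
  · have hk1 : (1 : ℝ) < k := by exact_mod_cast hk
    have hr : (1 - q) / (k - 1) ≤ q := by rw [div_le_iff₀ (by linarith)]; linarith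
    cases b <;> simp only [splitWeight]
    · linarith
    · exact div_nonneg (by linarith) (by linarith)

theorem sum_splitWeight (hq : 1 ≤ k * q) (hq1 : q ≤ 1) : ∑ b, splitWeight k q b = 1 := by
  rw [Fintype.sum_option]
  simp only [splitWeight, Finset.sum_const, Finset.card_univ, Fintype.card_fin, nsmul_eq_mul]
  rcases Nat.lt_or_ge k 2 with hk | hk
  · interval_cases k
    · simp at hq; linarith
    · simp at hq ⊢; linarith
  · have hk1 : (k : ℝ) - 1 ≠ 0 := by
      have : (2 : ℝ) ≤ k := by exact_mod_cast hk
      linarith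
    field_simp
    ring

theorem sum_splitWeight_pair (j : Fin k) :
    ∑ b ∈ {none, some j}, splitWeight k q b = q := by
  rw [Finset.sum_pair (Option.some_ne_none j).symm]
  simp [splitWeight]

theorem splitWeight_one_some (j : Fin k) : splitWeight k 1 (some j) = 0 := by
  simp [splitWeight]

end SplitWeight

theorem TSP_univ_le_sum_split {c : V → V → ℝ} (htri : ∀ x y z, c x z ≤ c x y + c y z) {k : ℕ}
    [NeZero k] (ω : V → Option (Fin k)) {d : V} (hd : ω d = none) :
    TSP c Finset.univ ≤ ∑ j, TSP c {v | ω v ∈ ({none, some j} : Finset _)} := by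
  have hcover : Finset.univ.biUnion (fun j : Fin k => {v | ω v ∈ ({none, some j} : Finset _)}) =
      Finset.univ := by
    refine Finset.eq_univ_of_forall fun v => Finset.mem_biUnion.mpr ?_
    cases hv : ω v with
    | none => exact ⟨0, by simp [hv]⟩
    | some j => exact ⟨j, by simp [hv]⟩
  have := TSP_biUnion_le htri Finset.univ_nonempty (d := d)
    (fun j : Fin k => {v | ω v ∈ ({none, some j} : Finset _)}) fun j _ => by simp [hd]
  rwa [hcover] at this

theorem TSP_univ_le_mul_apExpect {c : V → V → ℝ} (htri : ∀ x y z, c x z ≤ c x y + c y z)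
    {p : V → ℝ} (hp1 : ∀ v, p v ≤ 1) {d : V} (hd : p d = 1) {k : ℕ} (hk : ∀ v, 1 ≤ k * p v) :
    TSP c Finset.univ ≤ k * apExpect p (TSP c) := by
  have : NeZero k := ⟨by rintro rfl; norm_num at hk; exact hk d⟩
  set W : (V → Option (Fin k)) → ℝ := fun ω => ∏ v, splitWeight k (p v) (ω v)
  set copy : Fin k → (V → Option (Fin k)) → Finset V :=
    fun j ω => {v | ω v ∈ ({none, some j} : Finset _)}
  have hW : ∀ ω, W ω * TSP c Finset.univ ≤ W ω * ∑ j, TSP c (copy j ω) := fun ω => by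
    cases hω : ω d with
    | none =>
      exact mul_le_mul_of_nonneg_left (TSP_univ_le_sum_split htri ω hω)
        (Finset.prod_nonneg fun v _ => splitWeight_nonneg (hk v) (hp1 v) _)
    | some j =>
      have : W ω = 0 :=
        Finset.prod_eq_zero (Finset.mem_univ d) (by rw [hω, hd, splitWeight_one_some])
      simp [this]
  calc TSP c Finset.univ = ∑ ω, W ω * TSP c Finset.univ := by
        rw [← Finset.sum_mul, ← Fintype.prod_sum]
        simp [sum_splitWeight (hk _) (hp1 _)]
    _ ≤ ∑ ω, W ω * ∑ j, TSP c (copy j ω) := Finset.sum_le_sum fun ω _ => hW ω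
    _ = ∑ j, ∑ ω, W ω * TSP c (copy j ω) := by simp_rw [Finset.mul_sum]; exact Finset.sum_comm
    _ = ∑ _j : Fin k, apExpect p (TSP c) := Finset.sum_congr rfl fun j _ =>
        sum_prod_mul_eq_apExpect _ _ (fun v => sum_splitWeight (hk v) (hp1 v))
          (fun v => sum_splitWeight_pair j) _
    _ = k * apExpect p (TSP c) := by simp

end Coupling

theorem statement10_general {V : Type*} [Fintype V] [DecidableEq V]
    (c : V → V → ℝ) (p : V → ℝ)
    (htri : ∀ x y z, c x z ≤ c x y + c y z)
    (hp1 : ∀ v, p v ≤ 1)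
    (d : V) (hd : p d = 1)
    (hpmin : 0 < Finset.univ.inf' ⟨d, Finset.mem_univ d⟩ p)
    (α : ℝ) (hα : 1 ≤ α)
    (T : List V)
    (hTapx : cycCost c T ≤ α * TSP c Finset.univ) :
    cycCost c T ≤
      α * (⌈1 / Finset.univ.inf' ⟨d, Finset.mem_univ d⟩ p⌉ : ℝ) *
        apExpect p (fun A => TSP c A) := by
  set pmin := Finset.univ.inf' ⟨d, Finset.mem_univ d⟩ p
  have hk : ∀ v, 1 ≤ (⌈1 / pmin⌉₊ : ℝ) * p v := fun v =>
    calc 1 = 1 / pmin * pmin := (one_div_mul_cancel hpmin.ne').symm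
      _ ≤ ⌈1 / pmin⌉₊ * p v := mul_le_mul (Nat.le_ceil _) (Finset.inf'_le p (Finset.mem_univ v))
          hpmin.le (Nat.cast_nonneg _)
  calc cycCost c T ≤ α * TSP c Finset.univ := hTapx
    _ ≤ α * (⌈1 / pmin⌉₊ * apExpect p (TSP c)) :=
        mul_le_mul_of_nonneg_left (TSP_univ_le_mul_apExpect htri hp1 hd hk) (by linarith)
    _ = α * (⌈1 / pmin⌉ : ℝ) * apExpect p (TSP c) := by
        rw [natCast_ceil_eq_intCast_ceil (by positivity)]; ring

/-- for an instance with a depot and minimum activation probability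
`p_min > 0`, any `α`-approximate ATSP tour `T` on `V` satisfies
`c(T) ≤ α·⌈1/p_min⌉·E[TSP(A,c)]`. -/
theorem statement10 {V : Type*} [Fintype V] [DecidableEq V]
    (c : V → V → ℝ) (p : V → ℝ)
    (hc0 : ∀ x y, 0 ≤ c x y)
    (hcrefl : ∀ v, c v v = 0)
    (htri : ∀ x y z, c x z ≤ c x y + c y z)
    (hp0 : ∀ v, 0 ≤ p v) (hp1 : ∀ v, p v ≤ 1)
    (d : V) (hd : p d = 1)
    (hpmin : 0 < Finset.univ.inf' ⟨d, Finset.mem_univ d⟩ p)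
    (α : ℝ) (hα : 1 ≤ α)
    (T : List V) (hT : IsTour Finset.univ T)
    (hTapx : cycCost c T ≤ α * TSP c Finset.univ) :
    cycCost c T ≤
      α * (⌈1 / Finset.univ.inf' ⟨d, Finset.mem_univ d⟩ p⌉ : ℝ) *
        apExpect p (fun A => TSP c A) :=
  statement10_general c p htri hp1 d hd hpmin α hα T hTapx

end
end
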